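/- arXiv:1605.02653 — 2 statements merged into one kernel-verified Lean document; each statement's English description precedes it below -/
import Mathlib

section
/- Let φ₂ : U(2) → U(3) be the two-photon homomorphism given by φ₂(S) = [[S₁₁², S₁₂², √2 S₁₁S₁₂], [S₂₁², S₂₂², √2 S₂₁S₂₂], [√2 S₁₁S₂₁, √2 S₁₂S₂₂, S₁₁S₂₂ + S₁₂S₂₁]]. Then for any 2×2 Hermitian matrix H, the derivative at t = 0 of t ↦ φ₂(e^{iHt}) equals i·H_U, where H_U = [[2H₁₁, 0, √2 H₁₂], [0, 2H₂₂, √2 H₂₁], [√2 H₂₁, √2 H₁₂, H₁₁ + H₂₂]]. -/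
open Matrix

attribute [local instance] Matrix.linftyOpNormedRing Matrix.linftyOpNormedAlgebra

noncomputable def rt2 : ℂ := (Real.sqrt 2 : ℝ)

/-- The two-photon map `φ₂` sending a `2 × 2` matrix `S` to the `3 × 3` matrix
acting on the two-photon basis `|20⟩, |02⟩, |11⟩`. -/
noncomputable def phi2 (S : Matrix (Fin 2) (Fin 2) ℂ) : Matrix (Fin 3) (Fin 3) ℂ :=
  !![S 0 0 ^ 2, S 0 1 ^ 2, rt2 * S 0 0 * S 0 1;
     S 1 0 ^ 2, S 1 1 ^ 2, rt2 * S 1 0 * S 1 1;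
     rt2 * S 0 0 * S 1 0, rt2 * S 0 1 * S 1 1, S 0 0 * S 1 1 + S 0 1 * S 1 0]


/-- The two-photon Hamiltonian `H_U` associated to a one-photon Hamiltonian `H`. -/
noncomputable def HU (H : Matrix (Fin 2) (Fin 2) ℂ) : Matrix (Fin 3) (Fin 3) ℂ :=
  !![2 * H 0 0, 0, rt2 * H 0 1;
     0, 2 * H 1 1, rt2 * H 1 0;
     rt2 * H 1 0, rt2 * H 0 1, H 0 0 + H 1 1]

/-!
`φ₂` is quadratic in the entries of `S`, so along a curve through the identity with velocity `X`
the derivative of `φ₂` is its differential at `1` applied to `X`, namely `H_U(X)`. This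
differential is `ℂ`-linear, and `t ↦ e^{iHt}` passes through `1` with velocity `iH`, so the
derivative is `H_U(iH) = i H_U(H)`.
-/

theorem Matrix.hasDerivAt_iff {𝕜 E m n : Type*} [NontriviallyNormedField 𝕜]
    [NormedAddCommGroup E] [NormedSpace 𝕜 E] [Fintype m] [Fintype n]
    {f : 𝕜 → Matrix m n E} {f' : Matrix m n E} {t : 𝕜} :
    HasDerivAt f f' t ↔ ∀ i j, HasDerivAt (fun s => f s i j) (f' i j) t :=
  hasDerivAt_pi.trans (forall_congr' fun _ => hasDerivAt_pi)

theorem hasDerivAt_exp_ofReal_smul {𝔸 : Type*} [NormedRing 𝔸] [NormedAlgebra ℂ 𝔸]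
    [CompleteSpace 𝔸] (A : 𝔸) (t : ℝ) :
    HasDerivAt (fun s : ℝ => NormedSpace.exp ((s : ℂ) • A))
      (NormedSpace.exp ((t : ℂ) • A) * A) t := by
  simpa [Function.comp_def] using
    (hasDerivAt_exp_smul_const A (t : ℂ)).scomp t Complex.ofRealCLM.hasDerivAt

theorem HU_smul (c : ℂ) (X : Matrix (Fin 2) (Fin 2) ℂ) : HU (c • X) = c • HU X := by
  ext i j
  fin_cases i <;> fin_cases j <;> simp [HU] <;> ring

theorem HasDerivAt.phi2_of_eq_one {U : ℝ → Matrix (Fin 2) (Fin 2) ℂ}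
    {X : Matrix (Fin 2) (Fin 2) ℂ} {t : ℝ} (hU : HasDerivAt U X t) (hU1 : U t = 1) :
    HasDerivAt (fun s => phi2 (U s)) (HU X) t := by
  rw [Matrix.hasDerivAt_iff] at hU ⊢
  intro i j
  fin_cases i <;> fin_cases j <;>
    simp only [phi2, HU, Fin.isValue, Fin.zero_eta, Fin.mk_one, Fin.reduceFinMk, of_apply,
      cons_val', cons_val, cons_val_zero, cons_val_one, cons_val_fin_one]
  · simpa [hU1] using (hU 0 0).fun_pow 2
  · simpa [hU1] using (hU 0 1).fun_pow 2
  · simpa [hU1] using ((hU 0 0).const_mul rt2).fun_mul (hU 0 1)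
  · simpa [hU1] using (hU 1 0).fun_pow 2
  · simpa [hU1] using (hU 1 1).fun_pow 2
  · simpa [hU1] using ((hU 1 0).const_mul rt2).fun_mul (hU 1 1)
  · simpa [hU1] using ((hU 0 0).const_mul rt2).fun_mul (hU 1 0)
  · simpa [hU1] using ((hU 0 1).const_mul rt2).fun_mul (hU 1 1)
  · simpa [hU1] using ((hU 0 0).fun_mul (hU 1 1)).fun_add ((hU 0 1).fun_mul (hU 1 0))

theorem phi2_hasDerivAt_general (H : Matrix (Fin 2) (Fin 2) ℂ) :
    HasDerivAt (fun t : ℝ => phi2 (NormedSpace.exp ((t : ℂ) • Complex.I • H)))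
      (Complex.I • HU H) 0 := by
  have hexp := hasDerivAt_exp_ofReal_smul (Complex.I • H) 0
  rw [Complex.ofReal_zero, zero_smul, NormedSpace.exp_zero, one_mul] at hexp
  rw [← HU_smul]
  exact hexp.phi2_of_eq_one (by simp)

/-- The derivative at `t = 0` of `t ↦ φ₂(e^{iHt})` is `i • H_U`, for any
`2 × 2` Hermitian matrix `H`. -/
theorem phi2_hasDerivAt (H : Matrix (Fin 2) (Fin 2) ℂ) (hH : H.IsHermitian) :
    HasDerivAt (fun t : ℝ => phi2 (NormedSpace.exp ((t : ℂ) • Complex.I • H)))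
      (Complex.I • HU H) 0 :=
  phi2_hasDerivAt_general H
end

section
/- The linear map dφ₂ : 𝔲(2) → 𝔲(3) sending iH to i·H_U with H_U = [[2H₁₁, 0, √2 H₁₂], [0, 2H₂₂, √2 H₂₁], [√2 H₂₁, √2 H₁₂, H₁₁ + H₂₂]] is a Lie algebra homomorphism: dφ₂([X,Y]) = [dφ₂(X), dφ₂(Y)] for all X, Y ∈ 𝔲(2). -/
open Matrix

set_option maxHeartbeats 3000000 in
/-- The differential `dφ₂`, sending the skew-Hermitian matrix `X = iH` to
`i • H_U` (which equals `HU X` by linearity of `H ↦ H_U`), is a Lie algebra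
homomorphism from `𝔲(2)` to `𝔲(3)`. -/
theorem dphi2_lieHom (X Y : Matrix (Fin 2) (Fin 2) ℂ)
    (hX : Xᴴ = -X) (hY : Yᴴ = -Y) :
    HU (X * Y - Y * X) = HU X * HU Y - HU Y * HU X := by
  have h2 : rt2 * rt2 = 2 := by
    simp only [rt2, ← Complex.ofReal_mul,
      Real.mul_self_sqrt (by norm_num : (0:ℝ) ≤ 2)]
    norm_num
  have sub3 : ∀ A B : Matrix (Fin 3) (Fin 3) ℂ, A - B = Matrix.of fun i j => A i j - B i j := by
    intros; rfl
  simp only [HU, Matrix.mul_fin_three, Matrix.sub_apply, Matrix.mul_apply,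
    Fin.sum_univ_two, sub3]
  congr 1
  ext i j
  fin_cases i <;> fin_cases j <;>
    simp only [Fin.reduceFinMk, Fin.isValue, Matrix.cons_val', Matrix.cons_val_zero,
      Matrix.cons_val_one, Matrix.head_cons, Matrix.empty_val', Matrix.cons_val_fin_one,
      Matrix.head_fin_const, Matrix.of_apply, Matrix.cons_val_two, Matrix.tail_cons] <;>
    ring_nf <;>
    simp only [show rt2 ^ 2 = 2 from by rw [sq, h2]] <;> ring_nf
end
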